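/- arXiv:math/0609800 — 2 statements merged into one kernel-verified Lean document; each statement's English description precedes it below -/
import Mathlib

section
/- Let Ω ⊆ ℂⁿ be a nonempty bounded open set, let w : Ω → ℝ be positive, continuous and Lebesgue-integrable, and fix x ∈ Ω. Suppose K_x ∈ L²_hol(Ω) satisfies the reproducing property ∫_Ω g·conj(K_x) dV = g(x) for every g ∈ L²_hol(Ω), and suppose k_w ∈ L²_hol(Ω, w) satisfies the weighted reproducing property ∫_Ω f·conj(k_w)·w dV = f(x) for every f ∈ L²_hol(Ω, w). Assume that L²_hol(Ω) ∩ L²_hol(Ω, w) is dense in L²_hol(Ω, w) with respect to the norm of L²(Ω, w dV). If h ∈ L²_hol(Ω) ∩ L²_hol(Ω, w) satisfies ∫_Ω w·h·conj(g) dV = conj(g(x)) for every g ∈ L²_hol(Ω) (i.e. the Toeplitz operator T_w sends h to K_x), then h = k_w as functions on Ω. -/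
open MeasureTheory ComplexConjugate

private lemma prodInt {n : ℕ} {Ω : Set (Fin n → ℂ)} (hΩ : MeasurableSet Ω)
    {w : (Fin n → ℂ) → ℝ} (hw_cont : ContinuousOn w Ω) (hw_nonneg : ∀ z ∈ Ω, 0 ≤ w z)
    {f g : (Fin n → ℂ) → ℂ} (hf : ContinuousOn f Ω) (hg : ContinuousOn g Ω)
    (hfs : IntegrableOn (fun z => ‖f z‖ ^ 2 * w z) Ω volume)
    (hgs : IntegrableOn (fun z => ‖g z‖ ^ 2 * w z) Ω volume) :
    IntegrableOn (fun z => f z * conj (g z) * (w z : ℂ)) Ω volume := by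
  apply Integrable.mono' ((hfs.add hgs).div_const 2)
  · exact ((hf.mul (Complex.continuous_conj.comp_continuousOn hg)).mul
      (Complex.continuous_ofReal.comp_continuousOn hw_cont)).aestronglyMeasurable hΩ
  · rw [ae_restrict_iff' hΩ]
    filter_upwards with z hz
    have h1 : 0 ≤ w z := hw_nonneg z hz
    have : ‖f z * conj (g z) * (w z : ℂ)‖ = ‖f z‖ * ‖g z‖ * w z := by
      simp [abs_of_nonneg h1]
    rw [this]
    simp only [Pi.add_apply]
    nlinarith [mul_le_mul_of_nonneg_right (two_mul_le_add_sq ‖f z‖ ‖g z‖) h1]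

private lemma subSqInt {n : ℕ} {Ω : Set (Fin n → ℂ)} (hΩ : MeasurableSet Ω)
    {w : (Fin n → ℂ) → ℝ} (hw_cont : ContinuousOn w Ω) (hw_nonneg : ∀ z ∈ Ω, 0 ≤ w z)
    {f g : (Fin n → ℂ) → ℂ} (hf : ContinuousOn f Ω) (hg : ContinuousOn g Ω)
    (hfs : IntegrableOn (fun z => ‖f z‖ ^ 2 * w z) Ω volume)
    (hgs : IntegrableOn (fun z => ‖g z‖ ^ 2 * w z) Ω volume) :
    IntegrableOn (fun z => ‖f z - g z‖ ^ 2 * w z) Ω volume := by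
  apply Integrable.mono' ((hfs.const_mul 2).add (hgs.const_mul 2))
  · exact ((((hf.sub hg).norm.pow 2).mul hw_cont)).aestronglyMeasurable hΩ
  · rw [ae_restrict_iff' hΩ]
    filter_upwards with z hz
    have h1 : 0 ≤ w z := hw_nonneg z hz
    have h2 : ‖f z - g z‖ ≤ ‖f z‖ + ‖g z‖ := norm_sub_le _ _
    have h3 : ‖‖f z - g z‖ ^ 2 * w z‖ = ‖f z - g z‖ ^ 2 * w z := by
      rw [Real.norm_eq_abs, abs_of_nonneg (mul_nonneg (sq_nonneg _) h1)]
    rw [h3]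
    simp only [Pi.add_apply]
    have h4 : ‖f z - g z‖ ^ 2 ≤ 2 * ‖f z‖ ^ 2 + 2 * ‖g z‖ ^ 2 := by
      nlinarith [sq_nonneg (‖f z‖ - ‖g z‖), norm_nonneg (f z - g z)]
    nlinarith [mul_le_mul_of_nonneg_right h4 h1]

/-- on a nonempty bounded open `Ω ⊆ ℂⁿ` with positive continuous integrable
weight `w`, if `h ∈ L²_hol(Ω) ∩ L²_hol(Ω,w)` satisfies `T_w h = K_x` (i.e.
`∫ w·h·conj g = conj (g x)` for all `g ∈ L²_hol(Ω)`), and `L²_hol(Ω) ∩ L²_hol(Ω,w)` is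
dense in `L²_hol(Ω,w)`, then `h` equals the weighted reproducing kernel `k_w = K_w(·,x)`. -/
theorem stmt2 {n : ℕ} (Ω : Set (Fin n → ℂ)) (hne : Ω.Nonempty) (ho : IsOpen Ω)
    (hb : Bornology.IsBounded Ω)
    (w : (Fin n → ℂ) → ℝ) (hw_pos : ∀ z ∈ Ω, 0 < w z) (hw_cont : ContinuousOn w Ω)
    (hw_int : IntegrableOn w Ω volume)
    (x : Fin n → ℂ) (hx : x ∈ Ω)
    -- the (unweighted) Bergman kernel at `x`
    (Kx : (Fin n → ℂ) → ℂ)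
    (hKx_hol : DifferentiableOn ℂ Kx Ω)
    (hKx_sq : IntegrableOn (fun z => ‖Kx z‖ ^ 2) Ω volume)
    (hKx_rep : ∀ g : (Fin n → ℂ) → ℂ, DifferentiableOn ℂ g Ω →
      IntegrableOn (fun z => ‖g z‖ ^ 2) Ω volume →
      ∫ z in Ω, g z * conj (Kx z) = g x)
    -- the weighted Bergman kernel at `x`
    (kw : (Fin n → ℂ) → ℂ)
    (hkw_hol : DifferentiableOn ℂ kw Ω)
    (hkw_sq : IntegrableOn (fun z => ‖kw z‖ ^ 2 * w z) Ω volume)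
    (hkw_rep : ∀ f : (Fin n → ℂ) → ℂ, DifferentiableOn ℂ f Ω →
      IntegrableOn (fun z => ‖f z‖ ^ 2 * w z) Ω volume →
      ∫ z in Ω, f z * conj (kw z) * (w z : ℂ) = f x)
    -- density of `L²_hol(Ω) ∩ L²_hol(Ω,w)` in `L²_hol(Ω,w)`
    (hdense : ∀ f : (Fin n → ℂ) → ℂ, DifferentiableOn ℂ f Ω →
      IntegrableOn (fun z => ‖f z‖ ^ 2 * w z) Ω volume →
      ∀ ε : ℝ, 0 < ε → ∃ g : (Fin n → ℂ) → ℂ, DifferentiableOn ℂ g Ω ∧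
        IntegrableOn (fun z => ‖g z‖ ^ 2) Ω volume ∧
        IntegrableOn (fun z => ‖g z‖ ^ 2 * w z) Ω volume ∧
        (∫ z in Ω, ‖f z - g z‖ ^ 2 * w z) < ε)
    -- `h ∈ L²_hol(Ω) ∩ L²_hol(Ω,w)` with `T_w h = K_x`
    (h : (Fin n → ℂ) → ℂ)
    (hh_hol : DifferentiableOn ℂ h Ω)
    (hh_sq : IntegrableOn (fun z => ‖h z‖ ^ 2) Ω volume)
    (hh_sqw : IntegrableOn (fun z => ‖h z‖ ^ 2 * w z) Ω volume)
    (hTw : ∀ g : (Fin n → ℂ) → ℂ, DifferentiableOn ℂ g Ω →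
      IntegrableOn (fun z => ‖g z‖ ^ 2) Ω volume →
      ∫ z in Ω, (w z : ℂ) * h z * conj (g z) = conj (g x)) :
    ∀ z ∈ Ω, h z = kw z := by
  have hΩm : MeasurableSet Ω := ho.measurableSet
  have hw_nonneg : ∀ z ∈ Ω, 0 ≤ w z := fun z hz => (hw_pos z hz).le
  set u : (Fin n → ℂ) → ℂ := fun z => h z - kw z with hu_def
  have hh_cont : ContinuousOn h Ω := hh_hol.continuousOn
  have hkw_cont : ContinuousOn kw Ω := hkw_hol.continuousOn
  have hu_hol : DifferentiableOn ℂ u Ω := hh_hol.sub hkw_hol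
  have hu_cont : ContinuousOn u Ω := hh_cont.sub hkw_cont
  have hu_sqw : IntegrableOn (fun z => ‖u z‖ ^ 2 * w z) Ω volume :=
    subSqInt hΩm hw_cont hw_nonneg hh_cont hkw_cont hh_sqw hkw_sq
  -- key orthogonality : ⟨g, u⟩_w = 0 for all g in the dense class
  have key : ∀ g : (Fin n → ℂ) → ℂ, DifferentiableOn ℂ g Ω →
      IntegrableOn (fun z => ‖g z‖ ^ 2) Ω volume →
      IntegrableOn (fun z => ‖g z‖ ^ 2 * w z) Ω volume →
      ∫ z in Ω, g z * conj (u z) * (w z : ℂ) = 0 := by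
    intro g hg hg2 hg2w
    have hg_cont : ContinuousOn g Ω := hg.continuousOn
    have h1 : ∫ z in Ω, g z * conj (h z) * (w z : ℂ) = g x := by
      calc ∫ z in Ω, g z * conj (h z) * (w z : ℂ)
          = ∫ z in Ω, conj ((w z : ℂ) * h z * conj (g z)) := by
            refine integral_congr_ae (Filter.Eventually.of_forall fun z => ?_)
            simp only [map_mul, Complex.conj_conj, Complex.conj_ofReal]
            ring
        _ = conj (∫ z in Ω, (w z : ℂ) * h z * conj (g z)) := integral_conj
        _ = g x := by rw [hTw g hg hg2, Complex.conj_conj]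
    have h2 : ∫ z in Ω, g z * conj (kw z) * (w z : ℂ) = g x := hkw_rep g hg hg2w
    have hi1 : IntegrableOn (fun z => g z * conj (h z) * (w z : ℂ)) Ω volume :=
      prodInt hΩm hw_cont hw_nonneg hg_cont hh_cont hg2w hh_sqw
    have hi2 : IntegrableOn (fun z => g z * conj (kw z) * (w z : ℂ)) Ω volume :=
      prodInt hΩm hw_cont hw_nonneg hg_cont hkw_cont hg2w hkw_sq
    calc ∫ z in Ω, g z * conj (u z) * (w z : ℂ)
        = ∫ z in Ω, (g z * conj (h z) * (w z : ℂ) - g z * conj (kw z) * (w z : ℂ)) := by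
          refine integral_congr_ae (Filter.Eventually.of_forall fun z => ?_)
          simp only [hu_def, map_sub]
          ring
      _ = (∫ z in Ω, g z * conj (h z) * (w z : ℂ)) -
            ∫ z in Ω, g z * conj (kw z) * (w z : ℂ) := integral_sub hi1 hi2
      _ = 0 := by rw [h1, h2, sub_self]
  set I : ℝ := ∫ z in Ω, ‖u z‖ ^ 2 * w z with hI_def
  have hInonneg : 0 ≤ I :=
    setIntegral_nonneg hΩm fun z hz => mul_nonneg (sq_nonneg _) (hw_nonneg z hz)
  have hIzero : I = 0 := by
    refine le_antisymm ?_ hInonneg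
    have : ∀ ε : ℝ, 0 < ε → I ≤ 0 + ε := by
      intro ε hε
      obtain ⟨g, hg_hol, hg2, hg2w, hgε⟩ := hdense u hu_hol hu_sqw ε hε
      have hg_cont : ContinuousOn g Ω := hg_hol.continuousOn
      have hkey := key g hg_hol hg2 hg2w
      have hiu : IntegrableOn (fun z => u z * conj (u z) * (w z : ℂ)) Ω volume :=
        prodInt hΩm hw_cont hw_nonneg hu_cont hu_cont hu_sqw hu_sqw
      have hig : IntegrableOn (fun z => g z * conj (u z) * (w z : ℂ)) Ω volume :=
        prodInt hΩm hw_cont hw_nonneg hg_cont hu_cont hg2w hu_sqw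
      have hug_sqw : IntegrableOn (fun z => ‖u z - g z‖ ^ 2 * w z) Ω volume :=
        subSqInt hΩm hw_cont hw_nonneg hu_cont hg_cont hu_sqw hg2w
      have hC : (I : ℂ) = ∫ z in Ω, (u z - g z) * conj (u z) * (w z : ℂ) := by
        have e1 : (I : ℂ) = ∫ z in Ω, u z * conj (u z) * (w z : ℂ) := by
          rw [hI_def]
          calc ((∫ z in Ω, ‖u z‖ ^ 2 * w z : ℝ) : ℂ)
              = ∫ z in Ω, ((‖u z‖ ^ 2 * w z : ℝ) : ℂ) := (integral_ofReal).symm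
            _ = ∫ z in Ω, u z * conj (u z) * (w z : ℂ) := by
                refine integral_congr_ae (Filter.Eventually.of_forall fun z => ?_)
                simp only [Complex.mul_conj']
                push_cast
                ring
        have e2 : ∫ z in Ω, (u z - g z) * conj (u z) * (w z : ℂ) =
            (∫ z in Ω, u z * conj (u z) * (w z : ℂ)) -
              ∫ z in Ω, g z * conj (u z) * (w z : ℂ) := by
          rw [← integral_sub hiu hig]
          refine integral_congr_ae (Filter.Eventually.of_forall fun z => ?_)
          ring
        rw [e2, hkey, sub_zero, e1]
      have hb1 : I ≤ ∫ z in Ω, ‖(u z - g z) * conj (u z) * (w z : ℂ)‖ := by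
        have := norm_integral_le_integral_norm (μ := volume.restrict Ω)
          (f := fun z => (u z - g z) * conj (u z) * (w z : ℂ))
        rw [← hC] at this
        simpa [abs_of_nonneg hInonneg] using this
      have hb2 : (∫ z in Ω, ‖(u z - g z) * conj (u z) * (w z : ℂ)‖) ≤
          ∫ z in Ω, (‖u z - g z‖ ^ 2 * w z + ‖u z‖ ^ 2 * w z) / 2 := by
        refine integral_mono_of_nonneg (Filter.Eventually.of_forall fun z => norm_nonneg _)
          ((hug_sqw.add hu_sqw).div_const 2) ?_
        filter_upwards [ae_restrict_mem hΩm] with z hz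
        have h1 : 0 ≤ w z := hw_nonneg z hz
        have heq : ‖(u z - g z) * conj (u z) * (w z : ℂ)‖ = ‖u z - g z‖ * ‖u z‖ * w z := by
          simp [abs_of_nonneg h1]
        rw [heq]
        nlinarith [mul_le_mul_of_nonneg_right (two_mul_le_add_sq ‖u z - g z‖ ‖u z‖) h1]
      have hb3 : (∫ z in Ω, (‖u z - g z‖ ^ 2 * w z + ‖u z‖ ^ 2 * w z) / 2) =
          ((∫ z in Ω, ‖u z - g z‖ ^ 2 * w z) + I) / 2 := by
        rw [integral_div, integral_add hug_sqw hu_sqw]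
      have : I ≤ ((∫ z in Ω, ‖u z - g z‖ ^ 2 * w z) + I) / 2 := by
        calc I ≤ _ := hb1
          _ ≤ _ := hb2
          _ = _ := hb3
      linarith
    exact le_of_forall_pos_le_add this
  -- conclude pointwise
  have hae : (fun z => ‖u z‖ ^ 2 * w z) =ᶠ[ae (volume.restrict Ω)] 0 := by
    refine (integral_eq_zero_iff_of_nonneg_ae ?_ hu_sqw).mp hIzero
    filter_upwards [ae_restrict_mem hΩm] with z hz
    exact mul_nonneg (sq_nonneg _) (hw_nonneg z hz)
  intro z hz
  by_contra hcon
  have huz : u z ≠ 0 := sub_ne_zero.mpr hcon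
  have hcAt : ContinuousAt u z := hu_cont.continuousAt (ho.mem_nhds hz)
  have hev : ∀ᶠ y in nhds z, y ∈ Ω ∧ u y ≠ 0 := by
    have h1 : ∀ᶠ y in nhds z, y ∈ Ω := ho.mem_nhds hz
    exact h1.and (hcAt.eventually_ne huz)
  obtain ⟨t, hts, hto, hzt⟩ := eventually_nhds_iff.mp hev
  have htpos : 0 < volume t := hto.measure_pos volume ⟨z, hzt⟩
  have htsub : t ⊆ {y | ¬((fun z => ‖u z‖ ^ 2 * w z) y = (0 : (Fin n → ℂ) → ℝ) y)} := by
    intro y hy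
    obtain ⟨hyΩ, hyu⟩ := hts y hy
    have : 0 < ‖u y‖ ^ 2 * w y :=
      mul_pos (pow_pos (norm_pos_iff.mpr hyu) 2) (hw_pos y hyΩ)
    simp only [Set.mem_setOf_eq, Pi.zero_apply]
    exact this.ne'
  have hnull : volume.restrict Ω t = 0 := measure_mono_null htsub hae
  rw [Measure.restrict_apply hto.measurableSet,
    Set.inter_eq_self_of_subset_left (fun y hy => (hts y hy).1)] at hnull
  exact htpos.ne' hnull
end

section
/- The function R(w) := Σ_{k=0}^∞ ((k+1)(k+2)/(k+3))·w^k − (1 − w)^{−2} + (1 − w)^{−1} − 2·Log(1/(1 − w)) is bounded on the open unit disc {w ∈ ℂ : |w| < 1}. Consequently, with ρ := 1 − w, the weighted Bergman kernel Σ_{k=0}^∞ ((k+1)(k+2)/(k+3))·w^k of the disc with weight 2 − |z|² equals ρ^{−2} − ρ^{−1} − 2·Log ρ plus a function bounded on the disc; in particular it genuinely contains a logarithmic term. -/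
/-!
Subtracting the Taylor coefficients of `(1 - w)⁻²`, `-(1 - w)⁻¹` and `2 Log (1/(1 - w))`, namely
`k + 1`, `-1` and `2/k`, from `(k + 1)(k + 2)/(k + 3)` leaves `-6/(k(k + 3)) = O(1/k²)` for `k ≥ 1`.
So `R` is a power series whose coefficients are absolutely summable, and it is bounded on the
disc by the sum of their norms.
-/

open Complex

lemma hasSum_succ_mul_geometric {𝕜 : Type*} [NormedDivisionRing 𝕜] [HasSummableGeomSeries 𝕜]
    {r : 𝕜} (hr : ‖r‖ < 1) : HasSum (fun n : ℕ ↦ ((n : 𝕜) + 1) * r ^ n) ((1 - r) ^ 2)⁻¹ := by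
  simpa using hasSum_choose_mul_geometric_of_norm_lt_one 1 hr

lemma Complex.log_one_div_one_sub {z : ℂ} (hz : ‖z‖ < 1) :
    log (1 / (1 - z)) = -log (1 - z) := by
  have h : 1 - z ∈ slitPlane := by
    simpa [sub_eq_add_neg] using mem_slitPlane_of_norm_lt_one (z := -z) (by simpa using hz)
  rw [one_div, log_inv _ (slitPlane_arg_ne_pi h)]

lemma Complex.hasSum_log_one_div_one_sub {z : ℂ} (hz : ‖z‖ < 1) :
    HasSum (fun n : ℕ ↦ z ^ n / n) (log (1 / (1 - z))) := by
  rw [log_one_div_one_sub hz]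
  exact hasSum_taylorSeries_neg_log hz

lemma summable_div_succ_sq (c : ℝ) : Summable (fun k : ℕ ↦ c / ((k : ℝ) + 1) ^ 2) := by
  have h := ((summable_nat_add_iff 1).mpr (Real.summable_one_div_nat_pow.mpr one_lt_two)).mul_left c
  simpa [div_eq_mul_inv] using h

/-- The `k`-th Taylor coefficient of `R`. At `k = 0` the junk value `2 / 0 = 0` is the right one,
`Log (1/(1 - w))` having no constant term. -/
noncomputable def remainderCoeff (k : ℕ) : ℂ :=
  ((k : ℂ) + 1) * ((k : ℂ) + 2) / ((k : ℂ) + 3) - ((k : ℂ) + 1) + 1 - 2 / k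

lemma remainderCoeff_succ (n : ℕ) :
    remainderCoeff (n + 1) = ((-6 / (((n : ℝ) + 1) * ((n : ℝ) + 4)) : ℝ) : ℂ) := by
  have h3 : (n : ℂ) + 1 + 3 ≠ 0 := by norm_cast
  have h4 : (n : ℂ) + 4 ≠ 0 := by norm_cast
  have h1 : (n : ℂ) + 1 ≠ 0 := by norm_cast
  unfold remainderCoeff
  push_cast
  field_simp
  ring

lemma norm_remainderCoeff_le (k : ℕ) : ‖remainderCoeff k‖ ≤ 6 / ((k : ℝ) + 1) ^ 2 := by
  rcases k with _ | n
  · norm_num [remainderCoeff]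
  rw [remainderCoeff_succ, norm_real, Real.norm_eq_abs, abs_div, abs_neg,
    abs_of_pos (by positivity), abs_of_pos (by positivity)]
  push_cast
  gcongr
  nlinarith

lemma norm_remainderCoeff_mul_pow_le {w : ℂ} (hw : ‖w‖ ≤ 1) (k : ℕ) :
    ‖remainderCoeff k * w ^ k‖ ≤ 6 / ((k : ℝ) + 1) ^ 2 := by
  rw [norm_mul, norm_pow]
  exact (mul_le_of_le_one_right (norm_nonneg _) (pow_le_one₀ (norm_nonneg w) hw)).trans
    (norm_remainderCoeff_le k)

lemma hasSum_kernel_mul_pow {w : ℂ} (hw : ‖w‖ < 1) :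
    HasSum (fun k : ℕ ↦ ((k : ℂ) + 1) * ((k : ℂ) + 2) / ((k : ℂ) + 3) * w ^ k)
      ((∑' k, remainderCoeff k * w ^ k) + ((1 - w) ^ 2)⁻¹ - (1 - w)⁻¹
        + 2 * log (1 / (1 - w))) := by
  have hR : Summable (fun k ↦ remainderCoeff k * w ^ k) :=
    (summable_div_succ_sq 6).of_norm_bounded (norm_remainderCoeff_mul_pow_le hw.le)
  refine HasSum.congr_fun (((hR.hasSum.add (hasSum_succ_mul_geometric hw)).sub
    (hasSum_geometric_of_norm_lt_one hw)).add ((hasSum_log_one_div_one_sub hw).mul_left 2))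
    fun k ↦ ?_
  unfold remainderCoeff
  ring

/-- the function
`R(w) = Σ_k ((k+1)(k+2)/(k+3))·wᵏ - (1-w)⁻² + (1-w)⁻¹ - 2·Log(1/(1-w))`
is bounded on the open unit disc; i.e. the weighted Bergman kernel of the disc with
weight `2-|z|²` equals `ρ⁻² - ρ⁻¹ - 2 Log ρ` (with `ρ = 1-w`) up to a bounded function. -/
theorem stmt10 : ∃ C : ℝ, ∀ w : ℂ, ‖w‖ < 1 →
    ‖(∑' k : ℕ, (((k : ℂ) + 1) * ((k : ℂ) + 2) / ((k : ℂ) + 3)) * w ^ k)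
        - ((1 - w) ^ 2)⁻¹ + (1 - w)⁻¹ - 2 * Complex.log (1 / (1 - w))‖ ≤ C := by
  refine ⟨∑' k : ℕ, 6 / ((k : ℝ) + 1) ^ 2, fun w hw ↦ ?_⟩
  calc _ = ‖∑' k, remainderCoeff k * w ^ k‖ := by
        rw [(hasSum_kernel_mul_pow hw).tsum_eq]; abel_nf
    _ ≤ _ := tsum_of_norm_bounded (summable_div_succ_sq 6).hasSum
        (norm_remainderCoeff_mul_pow_le hw.le)
end
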